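/- arXiv:2009.03276 — 2 statements merged into one kernel-verified Lean document; each statement's English description precedes it below -/
import Mathlib

section
/- Let n be a natural number, t = (t_1, …, t_{n+1}) ∈ ℂ^{n+1} and X ∈ ℂ with |t_k X| < 1 for all k = 1, …, n+1. Then ( Σ_{j=0}^{n} (-1)^{j+1} (n+1-j) e_j(t) X^j ) · ( Σ_{q=1}^∞ h_q(t) X^q ) + Σ_{j=1}^{n} (-1)^{j+1} (n+1-j) e_j(t) X^j = - Σ_{k=1}^{n+1} t_k X / (1 - t_k X). -/
/-!
With `u k = t k * X`, everything is a function of the `u k`. The series is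
`∏ k, (1 - u k)⁻¹ - 1`: multiply out the geometric series and group the terms by total degree.
The polynomial factor is `-∑ k, ∏ i ≠ k, (1 - u i)`, by expanding the products and counting, for
each set `A`, the `n + 1 - #A` indices `k ∉ A`. Multiplying these two gives
`-∑ k, (1 - u k)⁻¹`, and the remaining terms are bookkeeping with `u / (1 - u) = (1 - u)⁻¹ - 1`.
-/

open Finset

section PiProduct

variable {β : Type*}

theorem summable_pi_prod_of_nonneg : ∀ {m : ℕ} {g : Fin m → β → ℝ}, (∀ k b, 0 ≤ g k b) →
    (∀ k, Summable (g k)) → Summable fun α : Fin m → β => ∏ k, g k (α k)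
  | 0, _, _, _ => .of_finite
  | _ + 1, g, hg, hs => by
    have htail := summable_pi_prod_of_nonneg (fun k => hg k.succ) fun k => hs k.succ
    refine (Fin.consEquiv fun _ => β).summable_iff.mp <|
      ((hs 0).mul_of_nonneg htail (hg 0) fun _ => prod_nonneg fun _ _ => hg _ _).congr fun p => ?_
    simp [Fin.prod_univ_succ]

variable {𝕜 : Type*} [NormedField 𝕜]

theorem summable_norm_pi_prod {m : ℕ} {f : Fin m → β → 𝕜}
    (hf : ∀ k, Summable fun b => ‖f k b‖) : Summable fun α : Fin m → β => ‖∏ k, f k (α k)‖ := by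
  simpa only [norm_prod] using summable_pi_prod_of_nonneg (fun k b => norm_nonneg (f k b)) hf

variable [CompleteSpace 𝕜]

theorem tsum_pi_prod : ∀ {m : ℕ} {f : Fin m → β → 𝕜}, (∀ k, Summable fun b => ‖f k b‖) →
    ∑' α : Fin m → β, ∏ k, f k (α k) = ∏ k, ∑' b, f k b
  | 0, _, _ => by simp
  | _ + 1, f, hf => by
    rw [← (Fin.consEquiv fun _ => β).tsum_eq, Fin.prod_univ_succ,
      ← tsum_pi_prod fun k => hf k.succ,
      tsum_mul_tsum_of_summable_norm (hf 0) (summable_norm_pi_prod fun k => hf k.succ)]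
    simp [Fin.prod_univ_succ]

theorem hasSum_pi_prod_pow {m : ℕ} {u : Fin m → 𝕜} (hu : ∀ k, ‖u k‖ < 1) :
    HasSum (fun α : Fin m → ℕ => ∏ k, u k ^ α k) (∏ k, (1 - u k)⁻¹) := by
  have hs (k : Fin m) : Summable fun a : ℕ => ‖u k ^ a‖ := by
    simpa [norm_pow] using summable_geometric_of_lt_one (norm_nonneg _) (hu k)
  rw [← prod_congr rfl fun k _ => tsum_geometric_of_norm_lt_one (hu k), ← tsum_pi_prod hs]
  exact (summable_norm_pi_prod hs).of_norm.hasSum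

end PiProduct

theorem HasSum.sum_antidiagonalTuple {α : Type*} [AddCommMonoid α] [TopologicalSpace α]
    [ContinuousAdd α] [RegularSpace α] {m : ℕ} {f : (Fin m → ℕ) → α} {a : α} (hf : HasSum f a) :
    HasSum (fun q => ∑ x ∈ Nat.antidiagonalTuple m q, f x) a :=
  ((Nat.sigmaAntidiagonalTupleEquivTuple m).hasSum_iff.2 hf).sigma fun q => by
    rw [← sum_coe_sort]
    exact hasSum_fintype _

section Symmetric

variable {ι R : Type*} [CommSemiring R]

theorem sum_powersetCard_prod_mul_pow (s : Finset ι) (t : ι → R) (x : R) (j : ℕ) :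
    (∑ A ∈ powersetCard j s, ∏ k ∈ A, t k) * x ^ j = ∑ A ∈ powersetCard j s, ∏ k ∈ A, t k * x := by
  rw [sum_mul]
  refine sum_congr rfl fun A hA => ?_
  rw [prod_mul_distrib, prod_const, (mem_powersetCard.1 hA).2]

theorem sum_antidiagonalTuple_prod_pow_mul_pow (m q : ℕ) (t : Fin m → R) (x : R) :
    (∑ α ∈ Nat.antidiagonalTuple m q, ∏ k, t k ^ α k) * x ^ q =
      ∑ α ∈ Nat.antidiagonalTuple m q, ∏ k, (t k * x) ^ α k := by
  rw [sum_mul]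
  refine sum_congr rfl fun α hα => ?_
  simp_rw [mul_pow, prod_mul_distrib, prod_pow_eq_pow_sum, Nat.mem_antidiagonalTuple.1 hα]

theorem sum_prod_erase_one_add [DecidableEq ι] (s : Finset ι) (v : ι → R) :
    ∑ k ∈ s, ∏ i ∈ s.erase k, (1 + v i) =
      ∑ j ∈ range #s, ((#s - j : ℕ) : R) * ∑ A ∈ powersetCard j s, ∏ i ∈ A, v i := by
  have hswap : ∑ k ∈ s, ∑ A ∈ (s.erase k).powerset, ∏ i ∈ A, v i =
      ∑ A ∈ s.powerset, ∑ _k ∈ s \ A, ∏ i ∈ A, v i :=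
    sum_comm' fun k A => by
      simp only [mem_powerset, mem_sdiff, subset_erase]
      tauto
  simp_rw [prod_one_add, hswap, sum_const, sum_powerset, sum_range_succ _ #s, mul_sum]
  rw [powersetCard_self, sum_singleton, sdiff_self, bot_eq_empty, card_empty, zero_smul, add_zero]
  refine sum_congr rfl fun j _ => sum_congr rfl fun A hA => ?_
  obtain ⟨hAs, rfl⟩ := mem_powersetCard.1 hA
  rw [card_sdiff_of_subset hAs, nsmul_eq_mul]

end Symmetric

theorem sum_range_neg_one_pow_mul_sum_powersetCard {ι R : Type*} [CommRing R] [DecidableEq ι]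
    (s : Finset ι) (t : ι → R) (x : R) :
    ∑ j ∈ range #s, (-1 : R) ^ (j + 1) * ((#s - j : ℕ) : R) *
        (∑ A ∈ powersetCard j s, ∏ k ∈ A, t k) * x ^ j =
      -∑ k ∈ s, ∏ i ∈ s.erase k, (1 - t i * x) := by
  have hsign (a b : R) (j : ℕ) : (-1 : R) ^ (j + 1) * a * b * x ^ j = -(a * (b * (-x) ^ j)) := by
    rw [neg_pow]
    ring
  have hsub (i : ι) : 1 - t i * x = 1 + t i * -x := by ring
  simp only [hsign, hsub, sum_neg_distrib, sum_powersetCard_prod_mul_pow, sum_prod_erase_one_add]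

theorem sum_prod_erase_mul_prod_inv {ι K : Type*} [Field K] [DecidableEq ι] (s : Finset ι)
    {f : ι → K} (hf : ∀ i ∈ s, f i ≠ 0) :
    (∑ k ∈ s, ∏ i ∈ s.erase k, f i) * ∏ i ∈ s, (f i)⁻¹ = ∑ k ∈ s, (f k)⁻¹ := by
  rw [sum_mul]
  refine sum_congr rfl fun k hk => ?_
  rw [← mul_prod_erase s _ hk, prod_inv_distrib, mul_left_comm, mul_inv_cancel₀
    (prod_ne_zero_iff.2 fun i hi => hf i (mem_of_mem_erase hi)), mul_one]

/-- For `t ∈ ℂ^{n+1}` and `X ∈ ℂ` with `|t_k X| < 1` for all `k`,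
`( Σ_{j=0}^{n} (-1)^{j+1} (n+1-j) e_j(t) X^j ) · ( Σ_{q=1}^∞ h_q(t) X^q )
   + Σ_{j=1}^{n} (-1)^{j+1} (n+1-j) e_j(t) X^j = - Σ_{k=1}^{n+1} t_k X / (1 - t_k X)`,
where `e_j` is the elementary symmetric polynomial of degree `j` and `h_q` the complete
homogeneous symmetric polynomial of degree `q`. -/
theorem stmt_2 (n : ℕ) (t : Fin (n + 1) → ℂ) (X : ℂ)
    (h : ∀ k, ‖t k * X‖ < 1) :
    (∑ j ∈ Finset.range (n + 1),
          (-1 : ℂ) ^ (j + 1) * ((n + 1 - j : ℕ) : ℂ) *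
            (∑ A ∈ Finset.powersetCard j (Finset.univ : Finset (Fin (n + 1))),
              ∏ k ∈ A, t k) * X ^ j) *
        (∑' q : ℕ,
          (∑ α ∈ Finset.Nat.antidiagonalTuple (n + 1) (q + 1), ∏ k, t k ^ α k) * X ^ (q + 1))
      + ∑ j ∈ Finset.Icc 1 n,
          (-1 : ℂ) ^ (j + 1) * ((n + 1 - j : ℕ) : ℂ) *
            (∑ A ∈ Finset.powersetCard j (Finset.univ : Finset (Fin (n + 1))),
              ∏ k ∈ A, t k) * X ^ j
      = - ∑ k, t k * X / (1 - t k * X) := by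
  have hu (k : Fin (n + 1)) : 1 - t k * X ≠ 0 := (isUnit_one_sub_of_norm_lt_one (h k)).ne_zero
  have hS := sum_range_neg_one_pow_mul_sum_powersetCard univ t X
  rw [card_univ, Fintype.card_fin] at hS
  set D := ∑ k, ∏ i ∈ univ.erase k, (1 - t i * X)
  have hI : ∑ j ∈ Icc 1 n, (-1 : ℂ) ^ (j + 1) * ((n + 1 - j : ℕ) : ℂ) *
      (∑ A ∈ powersetCard j univ, ∏ k ∈ A, t k) * X ^ j = -D + (n + 1) := by
    rw [← Ico_add_one_right_eq_Icc, sum_Ico_eq_sub _ (Nat.le_add_left 1 n), hS]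
    simp [sub_eq_add_neg, add_comm]
  have hH : ∑' q : ℕ, (∑ α ∈ Nat.antidiagonalTuple (n + 1) (q + 1), ∏ k, t k ^ α k) *
      X ^ (q + 1) = ∏ k, (1 - t k * X)⁻¹ - 1 := by
    simp_rw [sum_antidiagonalTuple_prod_pow_mul_pow]
    refine ((hasSum_nat_add_iff' 1).2 (hasSum_pi_prod_pow h).sum_antidiagonalTuple).tsum_eq.trans ?_
    simp [Nat.antidiagonalTuple_zero_right]
  have hR : ∑ k, t k * X / (1 - t k * X) = ∑ k, (1 - t k * X)⁻¹ - (n + 1) := by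
    have hterm (k : Fin (n + 1)) : t k * X / (1 - t k * X) = (1 - t k * X)⁻¹ - 1 := by
      field_simp [hu k]
      ring
    simp [hterm, sum_sub_distrib]
  rw [hS, hI, hH, hR, ← sum_prod_erase_mul_prod_inv univ fun k _ => hu k]
  ring
end

section
/- For every real number a with 0 < a < 1, (d/ds)|_{s=0} ζ(s, a) + (d/ds)|_{s=0} ζ(s, 1-a) = - log | e^{2π√(-1) a} - 1 |, where the derivatives are in the s-variable of the meromorphically continued Hurwitz zeta function. -/
/-!
Since `ζ(s, a) + ζ(s, 1 - a) = 2 ζₑ(s, a)` with `ζₑ` the even Hurwitz zeta function, and the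
functional equation reads `ζₑ(1 - t, a) = 2 (2π)^{-t} Γ(t) cos(πt/2) C(t, a)` with
`C(s, a) = ∑ cos(2πan) n^{-s}`, differentiating at `t = 1`, where `cos(πt/2)` vanishes, shows that
the left-hand side equals `C(1, a)`. As the partial sums of `cos(2πan)` are bounded, summation by
parts turns `C(s, a)` into a series converging uniformly for `s ∈ [1, 2]`, so `C(1, a)` is the
conditionally convergent sum `∑ cos(2πan) / n`. By Abel's limit theorem that sum is
`Re(-log(1 - e^{2πia})) = -log |1 - e^{2πia}|`.
-/

open Complex Filter Topology Finset Set HurwitzZeta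

section DirichletTest

variable {E : Type*} [NormedAddCommGroup E] [NormedSpace ℝ E]

theorem sum_range_smul_eq_sum_range_sub_smul (b : ℕ → ℝ) (f : ℕ → E) (N : ℕ) :
    ∑ n ∈ range N, b n • f n =
      ∑ k ∈ range N, (b k - b (k + 1)) • ∑ n ∈ range (k + 1), f n
        + b N • ∑ n ∈ range N, f n := by
  induction N with
  | zero => simp
  | succ N ih =>
    simp only [sum_range_succ, ih, sub_smul, smul_add]
    abel

noncomputable def rpowWeight (s : ℝ) (n : ℕ) : ℝ := ((n : ℝ) + 1) ^ (-s)

lemma rpowWeight_nonneg (s : ℝ) (n : ℕ) : 0 ≤ rpowWeight s n := by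
  unfold rpowWeight; positivity

lemma rpowWeight_succ_le {s : ℝ} (hs : 0 ≤ s) (n : ℕ) :
    rpowWeight s (n + 1) ≤ rpowWeight s n := by
  unfold rpowWeight
  push_cast
  exact Real.rpow_le_rpow_of_nonpos (by positivity) (by linarith) (by linarith)

lemma tendsto_rpowWeight_atTop {s : ℝ} (hs : 0 < s) : Tendsto (rpowWeight s) atTop (𝓝 0) :=
  (tendsto_rpow_neg_atTop hs).comp (tendsto_atTop_add_const_right _ _ tendsto_natCast_atTop_atTop)

lemma rpowWeight_sub_succ_le {s : ℝ} (hs : 1 ≤ s) (n : ℕ) :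
    rpowWeight s n - rpowWeight s (n + 1) ≤ s / ((n : ℝ) + 1) ^ 2 := by
  unfold rpowWeight
  push_cast
  set x : ℝ := (n : ℝ) + 1
  have hx : 1 ≤ x := by simp [x]
  have hx0 : 0 < x := by linarith
  have hbernoulli : 1 - s / (x + 1) ≤ (x / (x + 1)) ^ s := by
    have := one_add_mul_self_le_rpow_one_add (s := -1 / (x + 1)) (by
      rw [neg_div, neg_le_neg_iff, div_le_one (by linarith)]; linarith) hs
    convert this using 2
    · ring
    · field_simp; ring
  have hsplit : (x + 1) ^ (-s) = x ^ (-s) * (x / (x + 1)) ^ s := by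
    rw [Real.div_rpow hx0.le (by linarith), Real.rpow_neg hx0.le, Real.rpow_neg (by linarith)]
    field_simp
  have hdecay : x ^ (-s) ≤ x⁻¹ := by
    rw [← Real.rpow_neg_one]
    exact Real.rpow_le_rpow_of_exponent_le hx (by linarith)
  calc x ^ (-s) - (x + 1) ^ (-s) ≤ x ^ (-s) * (s / (x + 1)) := by
        rw [hsplit]; nlinarith [Real.rpow_nonneg hx0.le (-s)]
    _ ≤ x⁻¹ * (s / x) := by
        gcongr
        · linarith
    _ = s / x ^ 2 := by field_simp

/-- The `k`-th term of `∑ (n + 1)^{-s} • f n` after summation by parts. -/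
noncomputable def abelTerm (f : ℕ → E) (s : ℝ) (k : ℕ) : E :=
  (rpowWeight s k - rpowWeight s (k + 1)) • ∑ n ∈ range (k + 1), f n

variable {f : ℕ → E} {C : ℝ}

lemma norm_abelTerm_le (hf : ∀ N, ‖∑ n ∈ range N, f n‖ ≤ C) {s : ℝ} (hs : 0 ≤ s) (k : ℕ) :
    ‖abelTerm f s k‖ ≤ (rpowWeight s k - rpowWeight s (k + 1)) * C := by
  rw [abelTerm, norm_smul, Real.norm_of_nonneg (sub_nonneg.2 (rpowWeight_succ_le hs k))]
  exact mul_le_mul_of_nonneg_left (hf _) (sub_nonneg.2 (rpowWeight_succ_le hs k))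

variable [CompleteSpace E]

lemma summable_abelTerm (hf : ∀ N, ‖∑ n ∈ range N, f n‖ ≤ C) {s : ℝ} (hs : 0 ≤ s) :
    Summable (abelTerm f s) := by
  have htelescope : Summable fun k ↦ rpowWeight s k - rpowWeight s (k + 1) := by
    refine summable_of_sum_range_le (c := rpowWeight s 0)
      (fun k ↦ sub_nonneg.2 (rpowWeight_succ_le hs k)) fun N ↦ ?_
    rw [sum_range_sub']
    linarith [rpowWeight_nonneg s N]
  exact .of_norm_bounded (htelescope.mul_right C) (norm_abelTerm_le hf hs)

/-- Dirichlet's test. -/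
theorem tendsto_sum_range_rpowWeight_smul (hf : ∀ N, ‖∑ n ∈ range N, f n‖ ≤ C) {s : ℝ}
    (hs : 0 < s) :
    Tendsto (fun N ↦ ∑ n ∈ range N, rpowWeight s n • f n) atTop (𝓝 (∑' k, abelTerm f s k)) := by
  have hboundary : Tendsto (fun N ↦ rpowWeight s N • ∑ n ∈ range N, f n) atTop (𝓝 0) := by
    refine squeeze_zero_norm (fun N ↦ ?_)
      (by simpa using (tendsto_rpowWeight_atTop hs).mul_const C)
    rw [norm_smul, Real.norm_of_nonneg (rpowWeight_nonneg s N)]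
    exact mul_le_mul_of_nonneg_left (hf N) (rpowWeight_nonneg s N)
  have := ((summable_abelTerm hf hs.le).hasSum.tendsto_sum_nat).add hboundary
  rw [add_zero] at this
  exact this.congr fun N ↦ (sum_range_smul_eq_sum_range_sub_smul _ _ N).symm

theorem continuousOn_tsum_abelTerm (hf : ∀ N, ‖∑ n ∈ range N, f n‖ ≤ C) (T : ℝ) :
    ContinuousOn (fun s ↦ ∑' k, abelTerm f s k) (Icc 1 T) := by
  refine continuousOn_tsum (f := fun (k : ℕ) (s : ℝ) ↦ abelTerm f s k)
    (u := fun k : ℕ ↦ T / ((k : ℝ) + 1) ^ 2 * C) (fun k ↦ ?_) ?_ ?_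
  · unfold abelTerm rpowWeight
    fun_prop (disch := positivity)
  · refine Summable.mul_right _ ?_
    simpa [div_eq_mul_inv] using ((summable_nat_add_iff 1).2
      (Real.summable_one_div_nat_pow.2 one_lt_two)).mul_left T
  · rintro k s ⟨hs1, hsT⟩
    have hC : 0 ≤ C := by simpa using hf 0
    refine (norm_abelTerm_le hf (by linarith) k).trans (mul_le_mul_of_nonneg_right ?_ hC)
    exact (rpowWeight_sub_succ_le hs1 k).trans (by gcongr)

end DirichletTest

open scoped Real

lemma cexp_two_pi_I_mul_eq_cexp_ofReal_mul_I (a : ℝ) :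
    cexp (2 * π * I * a) = cexp (↑(2 * π * a) * I) := by
  push_cast; ring_nf

lemma cexp_two_pi_I_mul_ne_one {a : ℝ} (ha : (a : UnitAddCircle) ≠ 0) :
    cexp (2 * π * I * a) ≠ 1 := by
  intro h
  apply ha
  apply AddCircle.injective_toCircle one_ne_zero
  ext1
  rw [AddCircle.toCircle_zero, AddCircle.toCircle_apply_mk, Circle.coe_exp, Circle.coe_one, ← h]
  push_cast; ring_nf

lemma norm_sum_range_pow_succ_le {z : ℂ} (hz : ‖z‖ ≤ 1) (hz1 : z ≠ 1) (N : ℕ) :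
    ‖∑ n ∈ range N, z ^ (n + 1)‖ ≤ 2 / ‖1 - z‖ := by
  have hgeom : (1 - z) * ∑ n ∈ range N, z ^ (n + 1) = z * (1 - z ^ N) := by
    simp only [pow_succ', ← mul_sum, mul_left_comm (1 - z), mul_neg_geom_sum]
  have hnum : ‖z * (1 - z ^ N)‖ ≤ 2 := by
    rw [norm_mul]
    calc ‖z‖ * ‖1 - z ^ N‖ ≤ 1 * (1 + 1) := by
          gcongr
          exact (norm_sub_le _ _).trans (by simpa using pow_le_one₀ (norm_nonneg z) hz)
      _ = 2 := by norm_num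
  rw [le_div_iff₀ (norm_pos_iff.2 (sub_ne_zero.2 hz1.symm)), mul_comm, ← norm_mul, hgeom]
  exact hnum

lemma re_cexp_two_pi_I_mul_pow (a : ℝ) (n : ℕ) :
    (cexp (2 * π * I * a) ^ n).re = Real.cos (2 * π * a * n) := by
  rw [cexp_two_pi_I_mul_eq_cexp_ofReal_mul_I, ← Complex.exp_nat_mul, ← exp_ofReal_mul_I_re]
  push_cast; ring_nf

lemma norm_sum_range_cos_le {a : ℝ} (hz : cexp (2 * π * I * a) ≠ 1) (N : ℕ) :
    ‖∑ n ∈ range N, Real.cos (2 * π * a * (n + 1))‖ ≤ 2 / ‖1 - cexp (2 * π * I * a)‖ := by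
  have hnorm : ‖cexp (2 * π * I * a)‖ ≤ 1 := by
    rw [cexp_two_pi_I_mul_eq_cexp_ofReal_mul_I, norm_exp_ofReal_mul_I]
  calc ‖∑ n ∈ range N, Real.cos (2 * π * a * (n + 1))‖
      = |(∑ n ∈ range N, cexp (2 * π * I * a) ^ (n + 1)).re| := by
        simp [re_sum, re_cexp_two_pi_I_mul_pow]
    _ ≤ 2 / ‖1 - cexp (2 * π * I * a)‖ :=
        (abs_re_le_norm _).trans (norm_sum_range_pow_succ_le hnorm hz N)

lemma hasSum_cos_div_mul_pow (a : ℝ) {x : ℝ} (hx : |x| < 1) :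
    HasSum (fun n : ℕ ↦ Real.cos (2 * π * a * n) / n * x ^ n)
      (-Real.log ‖1 - x * cexp (2 * π * I * a)‖) := by
  have hxz : ‖(x : ℂ) * cexp (2 * π * I * a)‖ < 1 := by
    rwa [norm_mul, cexp_two_pi_I_mul_eq_cexp_ofReal_mul_I, norm_exp_ofReal_mul_I, mul_one,
      norm_real]
  convert hasSum_re (hasSum_taylorSeries_neg_log hxz) using 1
  · ext n
    rw [mul_pow, ← ofReal_pow, mul_div_assoc, re_ofReal_mul, div_natCast_re,
      re_cexp_two_pi_I_mul_pow]
    ring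
  · rw [neg_re, log_re]

theorem eq_neg_log_of_tendsto_sum_cos_div {a l : ℝ} (hz : cexp (2 * π * I * a) ≠ 1)
    (h : Tendsto (fun N ↦ ∑ n ∈ range N, Real.cos (2 * π * a * n) / n) atTop (𝓝 l)) :
    l = -Real.log ‖1 - cexp (2 * π * I * a)‖ := by
  have habel := Real.tendsto_tsum_powerSeries_nhdsWithin_lt h
  have hlog : Tendsto (fun x : ℝ ↦ -Real.log ‖1 - x * cexp (2 * π * I * a)‖) (𝓝[<] 1)
      (𝓝 (-Real.log ‖1 - cexp (2 * π * I * a)‖)) := by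
    have hne : ‖1 - cexp (2 * π * I * a)‖ ≠ 0 := norm_ne_zero_iff.2 (sub_ne_zero.2 hz.symm)
    have : ContinuousAt (fun x : ℝ ↦ -Real.log ‖1 - x * cexp (2 * π * I * a)‖) 1 := by
      fun_prop (disch := simpa using hne)
    simpa using this.tendsto.mono_left nhdsWithin_le_nhds
  refine tendsto_nhds_unique (habel.congr' ?_) hlog
  filter_upwards [Ioo_mem_nhdsLT (show (0 : ℝ) < 1 by norm_num)] with x hx
  exact (hasSum_cos_div_mul_pow a (abs_lt.2 ⟨by linarith [hx.1], hx.2⟩)).tsum_eq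

namespace HurwitzZeta

lemma cosZeta_ofReal_eq_tsum_abelTerm {a : ℝ} (hz : cexp (2 * π * I * a) ≠ 1) {s : ℝ} (hs : 1 < s) :
    cosZeta a s = ↑(∑' k, abelTerm (fun n : ℕ ↦ Real.cos (2 * π * a * (n + 1))) s k) := by
  have hseries := (hasSum_nat_add_iff' 1).2 (hasSum_nat_cosZeta a (s := s) (by simpa using hs))
  have hs0 : (s : ℂ) ≠ 0 := ofReal_ne_zero.2 (by linarith)
  simp only [range_one, sum_singleton, Nat.cast_zero, mul_zero, Real.cos_zero, ofReal_one,
    zero_cpow hs0, div_zero, sub_zero] at hseries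
  refine tendsto_nhds_unique hseries.tendsto_sum_nat ?_
  refine ((continuous_ofReal.tendsto _).comp
    (tendsto_sum_range_rpowWeight_smul (norm_sum_range_cos_le hz) (by linarith))).congr fun N ↦ ?_
  simp only [Function.comp_apply, ofReal_sum, smul_eq_mul, ofReal_mul, rpowWeight]
  refine sum_congr rfl fun n _ ↦ ?_
  rw [Real.rpow_neg (by positivity), ofReal_inv, ofReal_cpow (by positivity)]
  push_cast
  ring

lemma cosZeta_one_eq_tsum_abelTerm {a : ℝ} (ha : (a : UnitAddCircle) ≠ 0) :
    cosZeta a 1 = ↑(∑' k, abelTerm (fun n : ℕ ↦ Real.cos (2 * π * a * (n + 1))) 1 k) := by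
  have hz := cexp_two_pi_I_mul_ne_one ha
  have heq : EqOn (fun s : ℝ ↦ cosZeta a s)
      (fun s ↦ ↑(∑' k, abelTerm (fun n : ℕ ↦ Real.cos (2 * π * a * (n + 1))) s k)) (Icc 1 2) := by
    refine EqOn.of_subset_closure (s := Ioc 1 2)
      (fun s hs ↦ cosZeta_ofReal_eq_tsum_abelTerm hz hs.1) ?_ ?_ Ioc_subset_Icc_self
      (closure_Ioc (by norm_num)).ge
    · exact ((differentiable_cosZeta_of_ne_zero ha).continuous.comp continuous_ofReal).continuousOn
    · exact continuous_ofReal.comp_continuousOn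
        (continuousOn_tsum_abelTerm (norm_sum_range_cos_le hz) 2)
  simpa using heq (left_mem_Icc.2 one_le_two)

theorem cosZeta_one {a : ℝ} (ha : (a : UnitAddCircle) ≠ 0) :
    cosZeta a 1 = -Real.log ‖1 - cexp (2 * π * I * a)‖ := by
  have hz := cexp_two_pi_I_mul_ne_one ha
  have hlim : Tendsto (fun N ↦ ∑ n ∈ range N, Real.cos (2 * π * a * n) / n) atTop
      (𝓝 (∑' k, abelTerm (fun n : ℕ ↦ Real.cos (2 * π * a * (n + 1))) 1 k)) := by
    rw [← tendsto_add_atTop_iff_nat 1]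
    refine (tendsto_sum_range_rpowWeight_smul (norm_sum_range_cos_le hz) one_pos).congr fun N ↦ ?_
    rw [sum_range_succ', Nat.cast_zero, div_zero, add_zero]
    refine sum_congr rfl fun n _ ↦ ?_
    rw [rpowWeight, Real.rpow_neg_one, smul_eq_mul]
    push_cast
    ring
  rw [cosZeta_one_eq_tsum_abelTerm ha, eq_neg_log_of_tendsto_sum_cos_div hz hlim, ofReal_neg]

lemma deriv_hurwitzZetaEven_zero {a : UnitAddCircle} (ha : a ≠ 0) :
    deriv (hurwitzZetaEven a) 0 = cosZeta a 1 / 2 := by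
  -- `cos (π t / 2)` vanishes at `t = 1`, so only its derivative contributes.
  set G : ℂ → ℂ := fun t ↦ 2 * (2 * π) ^ (-t) * Gamma t * cosZeta a t
  have hfeq : (fun t ↦ G t * cos (π * t / 2)) =ᶠ[𝓝 1] fun t ↦ hurwitzZetaEven a (1 - t) := by
    filter_upwards [(isOpen_lt continuous_const continuous_re).mem_nhds
      (show (0 : ℝ) < (1 : ℂ).re by simp)] with t ht
    have hnotpole (n : ℕ) : t ≠ -n := by
      rintro rfl
      simp only [neg_re, natCast_re] at ht
      linarith [n.cast_nonneg (α := ℝ)]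
    rw [hurwitzZetaEven_one_sub a hnotpole (Or.inl ha)]
    ring
  have hG : DifferentiableAt ℂ G 1 := by
    have hGamma : ∀ m : ℕ, (1 : ℂ) ≠ -m := fun m h ↦ by
      have := congrArg re h
      simp only [one_re, neg_re, natCast_re] at this
      linarith [m.cast_nonneg (α := ℝ)]
    exact (((differentiableAt_const _).mul (differentiableAt_id.neg.const_cpow
      (Or.inl (by simp [Real.pi_ne_zero])))).mul (differentiableAt_Gamma _ hGamma)).mul
      (differentiableAt_cosZeta a (Or.inr ha))
  have hcos : HasDerivAt (fun t : ℂ ↦ cos (π * t / 2)) (-(π / 2)) 1 := by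
    have := ((hasDerivAt_id' (1 : ℂ)).const_mul (π / 2 : ℂ)).ccos
    convert this using 1
    · ext t; ring_nf
    · simp
  have hrhs := (hG.hasDerivAt.mul hcos).congr_of_eventuallyEq hfeq.symm
  have hlhs : HasDerivAt (fun t ↦ hurwitzZetaEven a (1 - t)) (-deriv (hurwitzZetaEven a) 0) 1 :=
    HasDerivAt.comp_const_sub (1 : ℂ) 1 (by
      rw [sub_self]; exact (differentiableAt_hurwitzZetaEven a zero_ne_one).hasDerivAt)
  rw [← neg_neg (deriv (hurwitzZetaEven a) 0), hlhs.unique hrhs]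
  simp only [G, mul_one, cos_pi_div_two, mul_zero, zero_add, Gamma_one, cpow_neg_one]
  field_simp

end HurwitzZeta

/-- For every real `a` with `0 < a < 1`,
`(d/ds)|_{s=0} ζ(s, a) + (d/ds)|_{s=0} ζ(s, 1-a) = - log | e^{2π√(-1) a} - 1 |`, where the
derivatives are in the `s`-variable of the meromorphically continued Hurwitz zeta function. -/
theorem stmt_10 (a : ℝ) (h0 : 0 < a) (h1 : a < 1) :
    deriv (fun s : ℂ => HurwitzZeta.hurwitzZeta (↑a : UnitAddCircle) s) 0
      + deriv (fun s : ℂ => HurwitzZeta.hurwitzZeta (↑(1 - a) : UnitAddCircle) s) 0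
      = -(Real.log ‖Complex.exp (2 * Real.pi * Complex.I * a) - 1‖ : ℂ) := by
  have ha : (a : UnitAddCircle) ≠ 0 := by
    rw [Ne, AddCircle.coe_eq_zero_iff_of_mem_Ico ⟨h0.le, h1⟩]
    exact h0.ne'
  have hreflect : ((1 - a : ℝ) : UnitAddCircle) = -a := by
    rw [AddCircle.coe_sub, AddCircle.coe_period, zero_sub]
  have heven :
      (fun s ↦ hurwitzZeta a s + hurwitzZeta (-a) s) = fun s ↦ 2 * hurwitzZetaEven a s := by
    ext s
    rw [hurwitzZetaEven_eq]
    ring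
  rw [hreflect, ← deriv_fun_add (differentiableAt_hurwitzZeta _ zero_ne_one)
    (differentiableAt_hurwitzZeta _ zero_ne_one), heven, deriv_const_mul _
    (differentiableAt_hurwitzZetaEven _ zero_ne_one), deriv_hurwitzZetaEven_zero ha, cosZeta_one ha,
    norm_sub_rev]
  ring
end
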